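/- arXiv:1511.09440 — 3 statements merged into one kernel-verified Lean document; each statement's English description precedes it below -/
import Mathlib

section
/- Let p, q be polynomials with complex coefficients such that q ≠ 0, every complex root z of q satisfies |z| < 1, and deg p < deg q. Then p + q ≠ 0 and (1/(2π)) ∫_{0}^{2π} log |1 + p(e^{iθ})/q(e^{iθ})| dθ = Σ_{z} log |z|, where the sum ranges over the multiset of complex roots z of the polynomial p + q that satisfy |z| > 1 (counted with multiplicity). -/
/-!
On the unit circle `1 + p/q = (p + q)/q`, so the Bode integral is the difference of the
logarithmic Mahler measures of `p + q` and `q`. By Jensen's formula, each of these is the log of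
the leading coefficient plus the sum of `log |z|` over the roots outside the closed unit disc.
Since `deg p < deg q`, the leading coefficients of `p + q` and `q` agree, and `q` has no roots
outside the disc.
-/

open Polynomial Real

theorem Multiset.sum_map_posLog_norm_eq_sum_map_log_norm_filter {E : Type*}
    [SeminormedAddCommGroup E] (s : Multiset E) :
    (s.map fun z => log⁺ ‖z‖).sum =
      ((s.filter fun z => 1 < ‖z‖).map fun z => log ‖z‖).sum := by
  induction s using Multiset.induction with
  | empty => simp
  | cons a s ih =>
    by_cases h : 1 < ‖a‖
    · rw [Multiset.filter_cons_of_pos (p := fun z => 1 < ‖z‖) _ h, Multiset.map_cons,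
        Multiset.map_cons, Multiset.sum_cons, Multiset.sum_cons, ih,
        posLog_eq_log (by rw [abs_norm]; exact h.le)]
    · rw [Multiset.filter_cons_of_neg (p := fun z => 1 < ‖z‖) _ h, Multiset.map_cons,
        Multiset.sum_cons, ih,
        (posLog_eq_zero_iff _).2 (by rwa [abs_norm, ← not_lt]), zero_add]

namespace Polynomial

theorem logMahlerMeasure_eq_log_leadingCoeff_add_sum_log_roots_filter (p : ℂ[X]) :
    p.logMahlerMeasure =
      log ‖p.leadingCoeff‖ +
        ((p.roots.filter fun z => 1 < ‖z‖).map fun z => log ‖z‖).sum := by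
  rw [logMahlerMeasure_eq_log_leadingCoeff_add_sum_log_roots,
    Multiset.sum_map_posLog_norm_eq_sum_map_log_norm_filter]

theorem circleIntegrable_log_norm_eval (p : ℂ[X]) (c : ℂ) (R : ℝ) :
    CircleIntegrable (fun z => log ‖p.eval z‖) c R :=
  (analyticOnNhd_id.aeval_polynomial p).meromorphicOn.circleIntegrable_log_norm

theorem circleAverage_log_norm_eval_div_eval {p q : ℂ[X]} (hp : p ≠ 0) (hq : q ≠ 0) :
    circleAverage (fun z => log ‖p.eval z / q.eval z‖) 0 1 =
      p.logMahlerMeasure - q.logMahlerMeasure := by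
  have hae : (fun z => log ‖p.eval z / q.eval z‖)
      =ᶠ[Filter.codiscreteWithin (Metric.sphere 0 |1|)]
        fun z => log ‖p.eval z‖ - log ‖q.eval z‖ := by
    filter_upwards [compl_finite_mem_codiscreteWithin (p * q).roots.toFinset.finite_toSet]
      with z hz
    have hpq : (p * q).eval z ≠ 0 := by simpa [hp, hq] using hz
    rw [eval_mul, mul_ne_zero_iff] at hpq
    rw [norm_div, log_div (norm_ne_zero_iff.2 hpq.1) (norm_ne_zero_iff.2 hpq.2)]
  rw [circleAverage_congr_codiscreteWithin hae one_ne_zero,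
    circleAverage_fun_sub (circleIntegrable_log_norm_eval p 0 1)
      (circleIntegrable_log_norm_eval q 0 1)]
  rfl

end Polynomial

theorem Real.circleAverage_zero_one_eq_integral {E : Type*} [NormedAddCommGroup E]
    [NormedSpace ℝ E] (f : ℂ → E) :
    circleAverage f 0 1 =
      (1 / (2 * π)) • ∫ θ in (0:ℝ)..2 * π, f (Complex.exp (θ * Complex.I)) := by
  simp [circleAverage_def, circleMap]

/-- Bode integral / rate identity: for a stable strictly proper rational filter
`Q = p/q`, the Bode integral of the sensitivity `1 + Q` equals the sum of
`log |z|` over the roots `z` of `p + q` outside the (closed) unit disc. -/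
theorem bode_integral_rate (p q : Polynomial ℂ) (hq : q ≠ 0)
    (hroots : ∀ z ∈ q.roots, ‖z‖ < 1)
    (hdeg : p.degree < q.degree) :
    p + q ≠ 0 ∧
    (1 / (2 * Real.pi)) *
        (∫ θ in (0:ℝ)..(2 * Real.pi),
          Real.log (‖
            (1 + p.eval (Complex.exp (θ * Complex.I)) /
                  q.eval (Complex.exp (θ * Complex.I)))‖)) =
      (Multiset.map (fun z => Real.log ‖z‖)
        (Multiset.filter (fun z => 1 < ‖z‖) (p + q).roots)).sum := by
  have hpq : p + q ≠ 0 := by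
    rw [← degree_ne_bot, degree_add_eq_right_of_degree_lt hdeg, degree_ne_bot]
    exact hq
  refine ⟨hpq, ?_⟩
  have hsens : Set.EqOn (fun z => log ‖1 + p.eval z / q.eval z‖)
      (fun z => log ‖(p + q).eval z / q.eval z‖) (Metric.sphere 0 |1|) := by
    intro z hz
    have hqz : q.eval z ≠ 0 := fun h0 =>
      (hroots z ((mem_roots hq).2 h0)).ne (by simpa using hz)
    simp only [eval_add, add_div, div_self hqz, add_comm]
  have hq_filter : q.roots.filter (fun z => 1 < ‖z‖) = 0 :=
    Multiset.filter_eq_nil.2 fun z hz => (hroots z hz).not_gt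
  have hbode := circleAverage_zero_one_eq_integral fun z => log ‖1 + p.eval z / q.eval z‖
  rw [smul_eq_mul] at hbode
  rw [← hbode, circleAverage_congr_sphere hsens, circleAverage_log_norm_eval_div_eval hpq hq,
    logMahlerMeasure_eq_log_leadingCoeff_add_sum_log_roots_filter,
    logMahlerMeasure_eq_log_leadingCoeff_add_sum_log_roots_filter, hq_filter,
    leadingCoeff_add_of_degree_lt hdeg, Multiset.map_zero, Multiset.sum_zero, add_zero,
    add_sub_cancel_left]
end

section
/- Let s > 0 and c, d ∈ ℝ with r² := (s + c)² + d² > 0, and set ν := (−r² + √(r⁴ + 4 s r²))/2 (so that 0 < ν < s). Then for all real numbers a, b with (1+a)² + b² > 0: (1/2)·log((1+a)² + b²) + c·a + d·b − (s/2)·(a² + b²) ≤ −(1/2)·log(s − ν) + r²/(2ν) − c − s/2 − 1/2, with equality if and only if a = (s + c)/ν − 1 and b = d/ν. -/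
/-!
Write `z = (1 + a) + b i` and `w = (s + c) + d i`, so that `r² = ‖w‖²`. Up to the constant
`-c - s/2`, twice the objective splits with `κ = s - ν` as
`(log ‖z‖² - κ ‖z‖²) + (2 ⟪w, z⟫ - ν ‖z‖²)`.
The first part is at most `-log κ - 1` by `log u ≤ u - 1` (equality iff `κ ‖z‖² = 1`), the second
at most `‖w‖² / ν` by completing the square (equality iff `ν z = w`). The root `ν` of
`ν² + r² ν - s r² = 0` is chosen so that `κ r² = ν²`, which makes both equality cases coincide.
-/

open Real
open scoped InnerProductSpace

theorem root_pos_lt_and_mul_sub_eq_sq {r s ν : ℝ} (hs : 0 < s) (hr : 0 < r)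
    (hν : ν = (-r + √(r ^ 2 + 4 * s * r)) / 2) :
    0 < ν ∧ ν < s ∧ r * (s - ν) = ν ^ 2 := by
  have hsq : √(r ^ 2 + 4 * s * r) ^ 2 = r ^ 2 + 4 * s * r := sq_sqrt (by positivity)
  have hroot : r * (s - ν) = ν ^ 2 := by rw [hν]; linear_combination -hsq / 4
  have hpos : 0 < ν := by
    have : r < √(r ^ 2 + 4 * s * r) := lt_sqrt_of_sq_lt (by nlinarith)
    rw [hν]; linarith
  refine ⟨hpos, ?_, hroot⟩
  have : 0 < r * (s - ν) := hroot ▸ by positivity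
  linarith [(pos_iff_pos_of_mul_pos this).mp hr]

section InnerProductSpace

variable {F : Type*} [NormedAddCommGroup F] [InnerProductSpace ℝ F] {w z : F} {κ ν : ℝ}

theorem norm_sq_div_sub_two_inner_add_mul_norm_sq (w z : F) (hν : ν ≠ 0) :
    ‖w‖ ^ 2 / ν - 2 * ⟪w, z⟫_ℝ + ν * ‖z‖ ^ 2 = ‖w - ν • z‖ ^ 2 / ν := by
  rw [norm_sub_sq_real, real_inner_smul_right, norm_smul, mul_pow, norm_eq_abs, sq_abs]
  field_simp

theorem log_norm_sq_add_two_inner_gap_eq (hκ : 0 < κ) (hν : ν ≠ 0) (hz : z ≠ 0) :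
    (-log κ + ‖w‖ ^ 2 / ν - 1) - (log (‖z‖ ^ 2) + 2 * ⟪w, z⟫_ℝ - (κ + ν) * ‖z‖ ^ 2) =
      (κ * ‖z‖ ^ 2 - 1 - log (κ * ‖z‖ ^ 2)) + ‖w - ν • z‖ ^ 2 / ν := by
  rw [log_mul hκ.ne' (by positivity), ← norm_sq_div_sub_two_inner_add_mul_norm_sq w z hν]
  ring

theorem log_norm_sq_add_two_inner_le (hκ : 0 < κ) (hν : 0 < ν) (hz : z ≠ 0) :
    log (‖z‖ ^ 2) + 2 * ⟪w, z⟫_ℝ - (κ + ν) * ‖z‖ ^ 2 ≤ -log κ + ‖w‖ ^ 2 / ν - 1 := by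
  have hgap := log_norm_sq_add_two_inner_gap_eq (w := w) hκ hν.ne' hz
  have hlog := log_le_sub_one_of_pos (mul_pos hκ (pow_pos (norm_pos_iff.2 hz) 2))
  have hsq : 0 ≤ ‖w - ν • z‖ ^ 2 / ν := by positivity
  linarith

theorem log_norm_sq_add_two_inner_eq_iff (hκ : 0 < κ) (hν : 0 < ν) (hz : z ≠ 0)
    (hw : κ * ‖w‖ ^ 2 = ν ^ 2) :
    log (‖z‖ ^ 2) + 2 * ⟪w, z⟫_ℝ - (κ + ν) * ‖z‖ ^ 2 = -log κ + ‖w‖ ^ 2 / ν - 1 ↔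
      ν • z = w := by
  have hgap := log_norm_sq_add_two_inner_gap_eq (w := w) hκ hν.ne' hz
  have hlog := log_le_sub_one_of_pos (mul_pos hκ (pow_pos (norm_pos_iff.2 hz) 2))
  have hsq : 0 ≤ ‖w - ν • z‖ ^ 2 / ν := by positivity
  rw [eq_comm, ← sub_eq_zero, hgap, add_eq_zero_iff_of_nonneg (by linarith) hsq,
    div_eq_zero_iff, or_iff_left hν.ne', sq_eq_zero_iff, norm_eq_zero, sub_eq_zero (a := w),
    eq_comm (a := w)]
  refine ⟨And.right, fun h => ⟨?_, h⟩⟩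
  have hunit : κ * ‖z‖ ^ 2 = 1 := by
    have hnorm : ‖w‖ ^ 2 = ν ^ 2 * ‖z‖ ^ 2 := by
      rw [← h, norm_smul, mul_pow, norm_eq_abs, sq_abs]
    refine mul_left_cancel₀ (pow_ne_zero 2 hν.ne') ?_
    linear_combination hw - κ * hnorm
  simp [hunit]

end InnerProductSpace

/-- Pointwise per-frequency Lagrangian maximization (Theorem 2(a)):
with `s = 2λS_w`, `c = η'A + η₀`, `d = η'B`, `r² = (s+c)² + d²` and
`ν = (-r² + √(r⁴ + 4sr²))/2`, the Lagrangian integrand is maximized exactly at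
`a = (s+c)/ν - 1`, `b = d/ν`. -/
theorem pointwise_lagrangian_max (s c d : ℝ) (hs : 0 < s)
    (r2 : ℝ) (hr2 : r2 = (s + c) ^ 2 + d ^ 2) (hr2pos : 0 < r2)
    (ν : ℝ) (hν : ν = (-r2 + Real.sqrt (r2 ^ 2 + 4 * s * r2)) / 2) :
    (0 < ν ∧ ν < s) ∧
    ∀ a b : ℝ, 0 < (1 + a) ^ 2 + b ^ 2 →
      ((1 / 2) * Real.log ((1 + a) ^ 2 + b ^ 2) + c * a + d * b -
          (s / 2) * (a ^ 2 + b ^ 2) ≤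
        -(1 / 2) * Real.log (s - ν) + r2 / (2 * ν) - c - s / 2 - 1 / 2) ∧
      ((1 / 2) * Real.log ((1 + a) ^ 2 + b ^ 2) + c * a + d * b -
          (s / 2) * (a ^ 2 + b ^ 2) =
        -(1 / 2) * Real.log (s - ν) + r2 / (2 * ν) - c - s / 2 - 1 / 2 ↔
        a = (s + c) / ν - 1 ∧ b = d / ν) := by
  obtain ⟨hν0, hνs, hνr⟩ := root_pos_lt_and_mul_sub_eq_sq hs hr2pos hν
  have hκ : 0 < s - ν := sub_pos.2 hνs
  refine ⟨⟨hν0, hνs⟩, fun a b hT => ?_⟩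
  set z : ℂ := ⟨1 + a, b⟩
  set w : ℂ := ⟨s + c, d⟩
  have hz : ‖z‖ ^ 2 = (1 + a) ^ 2 + b ^ 2 := by rw [Complex.sq_norm, Complex.normSq_mk]; ring
  have hw : ‖w‖ ^ 2 = r2 := by rw [Complex.sq_norm, Complex.normSq_mk, hr2]; ring
  have hwz : ⟪w, z⟫_ℝ = (s + c) * (1 + a) + d * b := by simp [Complex.inner, z, w]; ring
  have hz0 : z ≠ 0 := fun h => hT.ne' (by rw [← hz, h, norm_zero]; norm_num)
  have hobj : (1 / 2) * log ((1 + a) ^ 2 + b ^ 2) + c * a + d * b - (s / 2) * (a ^ 2 + b ^ 2) =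
      (log (‖z‖ ^ 2) + 2 * ⟪w, z⟫_ℝ - (s - ν + ν) * ‖z‖ ^ 2) / 2 - c - s / 2 := by
    rw [hz, hwz]; ring
  have hbound : -(1 / 2) * log (s - ν) + r2 / (2 * ν) - c - s / 2 - 1 / 2 =
      (-log (s - ν) + ‖w‖ ^ 2 / ν - 1) / 2 - c - s / 2 := by
    rw [hw]; ring
  have hmax : ν • z = w ↔ a = (s + c) / ν - 1 ∧ b = d / ν := by
    rw [← eq_inv_smul_iff₀ hν0.ne', Complex.ext_iff]
    simp only [z, w, Complex.smul_re, Complex.smul_im, smul_eq_mul, eq_sub_iff_add_eq,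
      add_comm a, inv_mul_eq_div]
  rw [hobj, hbound, sub_left_inj, sub_left_inj, div_left_inj' two_ne_zero,
    log_norm_sq_add_two_inner_eq_iff hκ hν0 hz0 (by rw [hw, mul_comm, hνr]), hmax]
  exact ⟨by linarith [log_norm_sq_add_two_inner_le (w := w) hκ hν0 hz0], Iff.rfl⟩
end

section
/- Fix a continuous 2π-periodic S_w : ℝ → ℝ with S_w(θ) > 0 for all θ, P > 0 and h ∈ ℕ. Let λ > 0, η = (η₁, …, η_h) ∈ ℝ^h and η₀ ∈ ℝ be such that r²(θ) := (2λS_w(θ) + Σ_{n=1}^h η_n cos(nθ) + η₀)² + (Σ_{n=1}^h η_n sin(nθ))² > 0 for every θ ∈ [−π, π]. Define ν(θ) := (−r²(θ) + √(r⁴(θ) + 8λS_w(θ)r²(θ)))/2 and g(λ, η, η₀) := (1/(2π))∫_{−π}^{π} [ (1/2)log(2λS_w(θ) − ν(θ)) − r²(θ)/(2ν(θ)) + λS_w(θ) ] dθ − λP + η₀ + 1/2. Then for every h-feasible pair (a, b): (1/(4π)) ∫_{−π}^{π} log((1 + a(θ))² + b(θ)²) dθ ≤ −g(λ, η, η₀).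 In particular C_fb(h) ≤ −g(λ, η, η₀), so every such dual-feasible triple yields an upper bound on the h-constrained capacity C_fb(h) and hence on the feedback capacity. -/
open MeasureTheory

/-- `(a, b)` is an `h`-feasible pair for the `h`-constrained feedback-capacity
problem with noise power spectral density `Sw` and power budget `P`. -/
def HFeasible (Sw : ℝ → ℝ) (P : ℝ) (h : ℕ) (a b : ℝ → ℝ) : Prop :=
  Measurable a ∧ Measurable b ∧
  IntegrableOn (fun θ => a θ ^ 2) (Set.Icc (-Real.pi) Real.pi) ∧
  IntegrableOn (fun θ => b θ ^ 2) (Set.Icc (-Real.pi) Real.pi) ∧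
  (∀ᵐ θ ∂(volume.restrict (Set.Icc (-Real.pi) Real.pi)),
    0 < (1 + a θ) ^ 2 + b θ ^ 2) ∧
  IntegrableOn (fun θ => Real.log ((1 + a θ) ^ 2 + b θ ^ 2))
    (Set.Icc (-Real.pi) Real.pi) ∧
  (1 / (2 * Real.pi)) *
      (∫ θ in (-Real.pi)..Real.pi, (a θ ^ 2 + b θ ^ 2) * Sw θ) ≤ P ∧
  ∀ n : ℕ, n ≤ h →
    (∫ θ in (-Real.pi)..Real.pi,
      (a θ * Real.cos (n * θ) + b θ * Real.sin (n * θ))) = 0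

/-- The objective functional `(1/(4π)) ∫ log((1+a)² + b²)`. -/
noncomputable def hObjective (a b : ℝ → ℝ) : ℝ :=
  (1 / (4 * Real.pi)) *
    ∫ θ in (-Real.pi)..Real.pi, Real.log ((1 + a θ) ^ 2 + b θ ^ 2)

/-- The `h`-upper-bound `C_fb(h)`: the supremum of the objective over
`h`-feasible pairs. -/
noncomputable def Cfb (Sw : ℝ → ℝ) (P : ℝ) (h : ℕ) : ℝ :=
  sSup {R : ℝ | ∃ a b : ℝ → ℝ, HFeasible Sw P h a b ∧ R = hObjective a b}

/-!
Weak duality is proved pointwise in `θ`. Put `s = λ S_w(θ)`, `c = Σ ηₙ cos((n+1)θ) + η₀`,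
`d = Σ ηₙ sin((n+1)θ)` and `t = |1 + a + ib|`. Since `(2s + c)(1 + a) + d b ≤ √r² · t` by
Cauchy–Schwarz, the Lagrangian `½ log t² - s (a² + b²) + c a + d b` is at most
`log t - s t² + √r² t + s + c`, and the one-variable function `s t² - √r² t - log t` is minimised
at `t = √r² / ν`, where its value is `½ log(2s - ν) - r²/(2ν) + ½`. Integrating over `[-π, π]`,
the multiplier terms vanish by the orthogonality constraints, `∫ c = 2π η₀`, and the power
constraint bounds `λ ∫ S_w (a² + b²)` by `2π λ P`.
-/

open Real Set

section Scalar

variable {s ρ ν r t T : ℝ}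

lemma sq_add_mul_eq_of_eq_root (hs : 0 ≤ s) (hρ : 0 ≤ ρ)
    (hν : ν = (-ρ + √(ρ ^ 2 + 8 * s * ρ)) / 2) : ν ^ 2 + ρ * ν = 2 * s * ρ := by
  have hsq := sq_sqrt (show 0 ≤ ρ ^ 2 + 8 * s * ρ by positivity)
  rw [hν]
  linear_combination hsq / 4

lemma pos_of_eq_root (hs : 0 < s) (hρ : 0 < ρ)
    (hν : ν = (-ρ + √(ρ ^ 2 + 8 * s * ρ)) / 2) : 0 < ν := by
  have : ρ < √(ρ ^ 2 + 8 * s * ρ) := lt_sqrt_of_sq_lt (by nlinarith [mul_pos hs hρ])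
  rw [hν]
  linarith

lemma sub_pos_of_eq_root (hs : 0 < s) (hρ : 0 < ρ)
    (hν : ν = (-ρ + √(ρ ^ 2 + 8 * s * ρ)) / 2) : 0 < 2 * s - ν := by
  have := sq_add_mul_eq_of_eq_root hs.le hρ.le hν
  nlinarith [pos_of_eq_root hs hρ hν]

lemma sq_mul_sub_mul_sub_log_le (hs : 0 ≤ s) (hT : 0 < T)
    (hcrit : 2 * s * T ^ 2 = r * T + 1) (ht : 0 < t) :
    s * T ^ 2 - r * T - log T ≤ s * t ^ 2 - r * t - log t := by
  have hlog : log t - log T ≤ t / T - 1 := by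
    rw [← log_div ht.ne' hT.ne']
    exact log_le_sub_one_of_pos (by positivity)
  have hdiv : t / T = (2 * s * T - r) * t := by
    rw [div_eq_iff hT.ne']
    linear_combination -t * hcrit
  nlinarith [mul_nonneg hs (sq_nonneg (t - T))]

lemma dual_value_le_of_eq_root (hs : 0 < s) (hρ : 0 < ρ)
    (hν : ν = (-ρ + √(ρ ^ 2 + 8 * s * ρ)) / 2) (ht : 0 < t) :
    1 / 2 * log (2 * s - ν) - ρ / (2 * ν) + 1 / 2 ≤ s * t ^ 2 - √ρ * t - log t := by
  have hν0 := pos_of_eq_root hs hρ hν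
  have hquad := sq_add_mul_eq_of_eq_root hs.le hρ.le hν
  have hr : 0 < √ρ := sqrt_pos.2 hρ
  have hr2 : √ρ ^ 2 = ρ := sq_sqrt hρ.le
  -- `ν` is chosen so that `T = √ρ / ν` is the critical point of `t ↦ s t² - √ρ t - log t`.
  set T := √ρ / ν with hT
  have hrT : √ρ * T = ρ / ν := by rw [hT, mul_div_assoc', mul_self_sqrt hρ.le]
  have hcrit : 2 * s * T ^ 2 = √ρ * T + 1 := by
    rw [hrT, hT, div_pow, hr2]
    field_simp
    linear_combination -hquad
  have hgap : 2 * s - ν = (T ^ 2)⁻¹ := by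
    rw [hT, div_pow, hr2, inv_div]
    field_simp
    linear_combination -hquad
  have hmin : s * T ^ 2 - √ρ * T - log T = 1 / 2 * log (2 * s - ν) - ρ / (2 * ν) + 1 / 2 := by
    rw [hgap, log_inv, log_pow]
    push_cast
    linear_combination (1 / 2) * hcrit - (1 / 2) * hrT
  linarith [sq_mul_sub_mul_sub_log_le hs.le (by positivity) hcrit ht]

lemma half_log_le_lagrangian {c d x y : ℝ} (hs : 0 < s) (hρ : ρ = (2 * s + c) ^ 2 + d ^ 2)
    (hρpos : 0 < ρ) (hν : ν = (-ρ + √(ρ ^ 2 + 8 * s * ρ)) / 2)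
    (hxy : 0 < (1 + x) ^ 2 + y ^ 2) :
    1 / 2 * log ((1 + x) ^ 2 + y ^ 2) ≤
      s * (x ^ 2 + y ^ 2) - (c * x + d * y) -
        (1 / 2 * log (2 * s - ν) - ρ / (2 * ν) + s) - c - 1 / 2 := by
  set t := √((1 + x) ^ 2 + y ^ 2)
  have ht : 0 < t := sqrt_pos.2 hxy
  have ht2 : t ^ 2 = (1 + x) ^ 2 + y ^ 2 := sq_sqrt hxy.le
  have hcs : (2 * s + c) * (1 + x) + d * y ≤ √ρ * t := by
    rw [hρ, ← sqrt_mul (by positivity)]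
    refine (le_abs_self _).trans (abs_le_sqrt ?_)
    nlinarith [sq_nonneg ((2 * s + c) * y - d * (1 + x))]
  have hlog : 1 / 2 * log ((1 + x) ^ 2 + y ^ 2) = log t := by
    rw [← ht2, log_pow]
    push_cast
    ring
  have hlagr : s * (x ^ 2 + y ^ 2) - (c * x + d * y) - s - c =
      s * t ^ 2 - ((2 * s + c) * (1 + x) + d * y) := by
    rw [ht2]
    ring
  linarith [dual_value_le_of_eq_root hs hρpos hν ht]

end Scalar

section Trigonometric

variable {h : ℕ} (η : Fin h → ℝ)

noncomputable def cosSum (θ : ℝ) : ℝ := ∑ n : Fin h, η n * cos (((n : ℕ) + 1) * θ)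

noncomputable def sinSum (θ : ℝ) : ℝ := ∑ n : Fin h, η n * sin (((n : ℕ) + 1) * θ)

@[fun_prop]
lemma continuous_cosSum : Continuous (cosSum η) := by
  unfold cosSum
  fun_prop

@[fun_prop]
lemma continuous_sinSum : Continuous (sinSum η) := by
  unfold sinSum
  fun_prop

lemma integral_cos_nat_succ_mul (k : ℕ) : ∫ θ in (-π)..π, cos ((k + 1) * θ) = 0 := by
  have hsin : sin ((k + 1) * π) = 0 := by exact_mod_cast sin_nat_mul_pi (k + 1)
  rw [intervalIntegral.integral_comp_mul_left cos (by positivity), integral_cos, mul_neg,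
    sin_neg, hsin]
  simp

lemma integral_cosSum_add (η₀ : ℝ) : ∫ θ in (-π)..π, (cosSum η θ + η₀) = 2 * π * η₀ := by
  have hmodes : ∫ θ in (-π)..π, cosSum η θ = 0 := by
    unfold cosSum
    rw [intervalIntegral.integral_finsetSum fun n _ => by
      apply Continuous.intervalIntegrable; fun_prop]
    simp [integral_cos_nat_succ_mul]
  rw [intervalIntegral.integral_add (by apply Continuous.intervalIntegrable; fun_prop)
    intervalIntegrable_const, hmodes, intervalIntegral.integral_const, smul_eq_mul]
  ring

variable {η} {a b : ℝ → ℝ}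

lemma integral_cosSum_mul_add_sinSum_mul (η₀ : ℝ) (ha : IntervalIntegrable a volume (-π) π)
    (hb : IntervalIntegrable b volume (-π) π)
    (horth : ∀ n : ℕ, n ≤ h →
      ∫ θ in (-π)..π, (a θ * cos (n * θ) + b θ * sin (n * θ)) = 0) :
    ∫ θ in (-π)..π, ((cosSum η θ + η₀) * a θ + sinSum η θ * b θ) = 0 := by
  set mode : Fin h → ℝ → ℝ := fun n θ =>
    a θ * cos (((n : ℕ) + 1) * θ) + b θ * sin (((n : ℕ) + 1) * θ)
  have hmode : ∀ n ∈ Finset.univ, IntervalIntegrable (fun θ => η n * mode n θ) volume (-π) π :=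
    fun n _ => ((ha.mul_continuousOn (by fun_prop)).add
      (hb.mul_continuousOn (by fun_prop))).const_mul _
  have hexpand : (fun θ => (cosSum η θ + η₀) * a θ + sinSum η θ * b θ) =
      fun θ => ∑ n : Fin h, η n * mode n θ + η₀ * a θ := by
    funext θ
    rw [cosSum, sinSum, add_mul, Finset.sum_mul, Finset.sum_mul, add_right_comm,
      ← Finset.sum_add_distrib]
    exact congrArg (· + _) (Finset.sum_congr rfl fun n _ => by ring)
  have hmean : ∫ θ in (-π)..π, a θ = 0 := by simpa using horth 0 h.zero_le
  have hmode_zero : ∀ n : Fin h, ∫ θ in (-π)..π, mode n θ = 0 := fun n => by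
    simpa [mode] using horth (n + 1) n.2
  have hsum : IntervalIntegrable (fun θ => ∑ n : Fin h, η n * mode n θ) volume (-π) π := by
    simpa only [Finset.sum_fn] using IntervalIntegrable.sum Finset.univ hmode
  rw [hexpand, intervalIntegral.integral_add hsum (ha.const_mul _),
    intervalIntegral.integral_finsetSum hmode]
  simp [hmode_zero, hmean]

end Trigonometric

lemma intervalIntegrable_of_integrableOn_sq {u : ℝ → ℝ} {α β : ℝ} (hαβ : α ≤ β)
    (hu : AEStronglyMeasurable u (volume.restrict (Icc α β)))
    (hu2 : IntegrableOn (fun x => u x ^ 2) (Icc α β)) : IntervalIntegrable u volume α β :=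
  (intervalIntegrable_iff_integrableOn_Icc_of_le hαβ).2
    (((memLp_two_iff_integrable_sq hu).2 hu2).integrable one_le_two)

lemma hFeasible_zero {Sw : ℝ → ℝ} {P : ℝ} (hP : 0 ≤ P) (h : ℕ) : HFeasible Sw P h 0 0 := by
  refine ⟨measurable_const, measurable_const, ?_, ?_, ?_, ?_, ?_, fun n _ => by simp⟩ <;>
    simp [hP]

lemma Cfb_le {Sw : ℝ → ℝ} {P M : ℝ} {h : ℕ} (hP : 0 ≤ P)
    (hM : ∀ a b : ℝ → ℝ, HFeasible Sw P h a b → hObjective a b ≤ M) : Cfb Sw P h ≤ M :=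
  csSup_le ⟨_, 0, 0, hFeasible_zero hP h, rfl⟩ fun _ ⟨a, b, hab, hR⟩ => hR ▸ hM a b hab

section Dual

variable {Sw : ℝ → ℝ} {P lam η₀ : ℝ} {h : ℕ} {η : Fin h → ℝ} {r2 ν a b : ℝ → ℝ}

lemma eq_root_of_eq_fun (hν : ν = fun θ => (-r2 θ + √(r2 θ ^ 2 + 8 * lam * Sw θ * r2 θ)) / 2)
    (θ : ℝ) : ν θ = (-r2 θ + √(r2 θ ^ 2 + 8 * (lam * Sw θ) * r2 θ)) / 2 := by
  simp only [hν, mul_assoc]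

lemma intervalIntegrable_dualIntegrand (hScont : Continuous Sw) (hSpos : ∀ θ, 0 < Sw θ)
    (hlam : 0 < lam) (hr2c : Continuous r2) (hr2pos : ∀ θ ∈ Icc (-π) π, 0 < r2 θ)
    (hν : ν = fun θ => (-r2 θ + √(r2 θ ^ 2 + 8 * lam * Sw θ * r2 θ)) / 2) :
    IntervalIntegrable (fun θ => 1 / 2 * log (2 * lam * Sw θ - ν θ) - r2 θ / (2 * ν θ) +
      lam * Sw θ) volume (-π) π := by
  have hs : ∀ θ, 0 < lam * Sw θ := fun θ => mul_pos hlam (hSpos θ)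
  have hνc : Continuous ν := by rw [hν]; fun_prop
  refine ContinuousOn.intervalIntegrable ?_
  rw [uIcc_of_le (by linarith [pi_pos])]
  refine (ContinuousOn.sub ?_ ?_).add (by fun_prop)
  · refine continuousOn_const.mul (ContinuousOn.log (by fun_prop) fun θ hθ => ?_)
    simpa only [mul_assoc] using
      (sub_pos_of_eq_root (hs θ) (hr2pos θ hθ) (eq_root_of_eq_fun hν θ)).ne'
  · refine hr2c.continuousOn.div (by fun_prop) fun θ hθ => ?_
    have := pos_of_eq_root (hs θ) (hr2pos θ hθ) (eq_root_of_eq_fun hν θ)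
    positivity

lemma half_log_le_lagrangian_ae (hSpos : ∀ θ, 0 < Sw θ) (hlam : 0 < lam)
    (hr2 : r2 = fun θ => (2 * lam * Sw θ + cosSum η θ + η₀) ^ 2 + sinSum η θ ^ 2)
    (hr2pos : ∀ θ ∈ Icc (-π) π, 0 < r2 θ)
    (hν : ν = fun θ => (-r2 θ + √(r2 θ ^ 2 + 8 * lam * Sw θ * r2 θ)) / 2)
    (hpos : ∀ᵐ θ ∂(volume.restrict (Icc (-π) π)), 0 < (1 + a θ) ^ 2 + b θ ^ 2) :
    (fun θ => 1 / 2 * log ((1 + a θ) ^ 2 + b θ ^ 2)) ≤ᵐ[volume.restrict (Icc (-π) π)]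
      fun θ => lam * ((a θ ^ 2 + b θ ^ 2) * Sw θ) -
        ((cosSum η θ + η₀) * a θ + sinSum η θ * b θ) -
        (1 / 2 * log (2 * lam * Sw θ - ν θ) - r2 θ / (2 * ν θ) + lam * Sw θ) -
        (cosSum η θ + η₀) - 1 / 2 := by
  filter_upwards [hpos, ae_restrict_mem measurableSet_Icc] with θ hxy hθ
  have := half_log_le_lagrangian (c := cosSum η θ + η₀) (d := sinSum η θ)
    (mul_pos hlam (hSpos θ)) (by simp only [hr2, mul_assoc, add_assoc]) (hr2pos θ hθ)
    (eq_root_of_eq_fun hν θ) hxy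
  rw [← mul_assoc 2 lam] at this
  linear_combination this

lemma integral_half_log_le_dual (hScont : Continuous Sw) (hSpos : ∀ θ, 0 < Sw θ)
    (hlam : 0 < lam)
    (hr2 : r2 = fun θ => (2 * lam * Sw θ + cosSum η θ + η₀) ^ 2 + sinSum η θ ^ 2)
    (hr2pos : ∀ θ ∈ Icc (-π) π, 0 < r2 θ)
    (hν : ν = fun θ => (-r2 θ + √(r2 θ ^ 2 + 8 * lam * Sw θ * r2 θ)) / 2)
    (hab : HFeasible Sw P h a b) :
    1 / 2 * ∫ θ in (-π)..π, log ((1 + a θ) ^ 2 + b θ ^ 2) ≤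
      2 * π * (lam * P - η₀ - 1 / 2) - ∫ θ in (-π)..π,
        (1 / 2 * log (2 * lam * Sw θ - ν θ) - r2 θ / (2 * ν θ) + lam * Sw θ) := by
  obtain ⟨hma, hmb, ha2, hb2, hpos, hlog, hpower, horth⟩ := hab
  have hπ : -π ≤ π := by linarith [pi_pos]
  set G := fun θ => 1 / 2 * log (2 * lam * Sw θ - ν θ) - r2 θ / (2 * ν θ) + lam * Sw θ
  have hG : IntervalIntegrable G volume (-π) π :=
    intervalIntegrable_dualIntegrand hScont hSpos hlam (by rw [hr2]; fun_prop) hr2pos hν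
  have ha := intervalIntegrable_of_integrableOn_sq hπ hma.aestronglyMeasurable ha2
  have hb := intervalIntegrable_of_integrableOn_sq hπ hmb.aestronglyMeasurable hb2
  have hw : IntervalIntegrable (fun θ => lam * ((a θ ^ 2 + b θ ^ 2) * Sw θ)) volume (-π) π :=
    (((intervalIntegrable_iff_integrableOn_Icc_of_le hπ).2 (ha2.add hb2)).mul_continuousOn
      hScont.continuousOn).const_mul lam
  have hm : IntervalIntegrable (fun θ => (cosSum η θ + η₀) * a θ + sinSum η θ * b θ)
      volume (-π) π :=
    (ha.continuousOn_mul (by fun_prop)).add (hb.continuousOn_mul (by fun_prop))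
  have hc : IntervalIntegrable (fun θ => cosSum η θ + η₀) volume (-π) π := by
    apply Continuous.intervalIntegrable; fun_prop
  have hX : ∫ θ in (-π)..π, (a θ ^ 2 + b θ ^ 2) * Sw θ ≤ 2 * π * P := by
    rwa [one_div, inv_mul_le_iff₀ (by positivity)] at hpower
  calc _ = ∫ θ in (-π)..π, 1 / 2 * log ((1 + a θ) ^ 2 + b θ ^ 2) :=
        (intervalIntegral.integral_const_mul _ _).symm
    _ ≤ ∫ θ in (-π)..π, (lam * ((a θ ^ 2 + b θ ^ 2) * Sw θ) -
        ((cosSum η θ + η₀) * a θ + sinSum η θ * b θ) - G θ - (cosSum η θ + η₀) - 1 / 2) :=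
      intervalIntegral.integral_mono_ae_restrict hπ
        (((intervalIntegrable_iff_integrableOn_Icc_of_le hπ).2 hlog).const_mul _)
        ((((hw.sub hm).sub hG).sub hc).sub intervalIntegrable_const)
        (half_log_le_lagrangian_ae hSpos hlam hr2 hr2pos hν hpos)
    _ = lam * (∫ θ in (-π)..π, (a θ ^ 2 + b θ ^ 2) * Sw θ) -
        (∫ θ in (-π)..π, ((cosSum η θ + η₀) * a θ + sinSum η θ * b θ)) -
        (∫ θ in (-π)..π, G θ) - (∫ θ in (-π)..π, (cosSum η θ + η₀)) - π := by
      rw [intervalIntegral.integral_sub (((hw.sub hm).sub hG).sub hc) intervalIntegrable_const,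
        intervalIntegral.integral_sub ((hw.sub hm).sub hG) hc,
        intervalIntegral.integral_sub (hw.sub hm) hG, intervalIntegral.integral_sub hw hm,
        intervalIntegral.integral_const_mul, intervalIntegral.integral_const, smul_eq_mul]
      ring
    _ ≤ _ := by
      rw [integral_cosSum_mul_add_sinSum_mul η₀ ha hb horth, integral_cosSum_add]
      nlinarith [mul_le_mul_of_nonneg_left hX hlam.le]

end Dual

theorem weak_duality_general (Sw : ℝ → ℝ) (hScont : Continuous Sw)
    (hSpos : ∀ θ : ℝ, 0 < Sw θ)
    (P : ℝ) (hP : 0 < P) (h : ℕ)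
    (lam : ℝ) (hlam : 0 < lam) (η : Fin h → ℝ) (η₀ : ℝ)
    (r2 : ℝ → ℝ)
    (hr2 : r2 = fun θ =>
      (2 * lam * Sw θ + (∑ n : Fin h, η n * Real.cos (((n : ℕ) + 1) * θ)) + η₀) ^ 2 +
        (∑ n : Fin h, η n * Real.sin (((n : ℕ) + 1) * θ)) ^ 2)
    (hr2pos : ∀ θ ∈ Set.Icc (-Real.pi) Real.pi, 0 < r2 θ)
    (ν : ℝ → ℝ)
    (hν : ν = fun θ =>
      (-r2 θ + Real.sqrt ((r2 θ) ^ 2 + 8 * lam * Sw θ * r2 θ)) / 2)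
    (g : ℝ)
    (hg : g = (1 / (2 * Real.pi)) *
        (∫ θ in (-Real.pi)..Real.pi,
          ((1 / 2) * Real.log (2 * lam * Sw θ - ν θ) - r2 θ / (2 * ν θ) +
            lam * Sw θ)) - lam * P + η₀ + 1 / 2) :
    (∀ a b : ℝ → ℝ, HFeasible Sw P h a b → hObjective a b ≤ -g) ∧
    Cfb Sw P h ≤ -g := by
  have hbound : ∀ a b : ℝ → ℝ, HFeasible Sw P h a b → hObjective a b ≤ -g := fun a b hab => by
    have hdual := integral_half_log_le_dual (η := η) hScont hSpos hlam hr2 hr2pos hν hab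
    rw [hg, hObjective]
    calc _ = 1 / (2 * π) * (1 / 2 * ∫ θ in (-π)..π, log ((1 + a θ) ^ 2 + b θ ^ 2)) := by ring
      _ ≤ _ := mul_le_mul_of_nonneg_left hdual (by positivity)
      _ = _ := by field_simp; ring
  exact ⟨hbound, Cfb_le hP.le hbound⟩

/-- Weak duality (Theorem 2(a) / Corollary 1): every dual-feasible triple
`(λ, η, η₀)` gives an upper bound `-g(λ, η, η₀)` on the objective of every
`h`-feasible pair, hence on `C_fb(h)`. -/
theorem weak_duality (Sw : ℝ → ℝ) (hScont : Continuous Sw)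
    (hSper : ∀ θ : ℝ, Sw (θ + 2 * Real.pi) = Sw θ) (hSpos : ∀ θ : ℝ, 0 < Sw θ)
    (P : ℝ) (hP : 0 < P) (h : ℕ)
    (lam : ℝ) (hlam : 0 < lam) (η : Fin h → ℝ) (η₀ : ℝ)
    (r2 : ℝ → ℝ)
    (hr2 : r2 = fun θ =>
      (2 * lam * Sw θ + (∑ n : Fin h, η n * Real.cos (((n : ℕ) + 1) * θ)) + η₀) ^ 2 +
        (∑ n : Fin h, η n * Real.sin (((n : ℕ) + 1) * θ)) ^ 2)
    (hr2pos : ∀ θ ∈ Set.Icc (-Real.pi) Real.pi, 0 < r2 θ)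
    (ν : ℝ → ℝ)
    (hν : ν = fun θ =>
      (-r2 θ + Real.sqrt ((r2 θ) ^ 2 + 8 * lam * Sw θ * r2 θ)) / 2)
    (g : ℝ)
    (hg : g = (1 / (2 * Real.pi)) *
        (∫ θ in (-Real.pi)..Real.pi,
          ((1 / 2) * Real.log (2 * lam * Sw θ - ν θ) - r2 θ / (2 * ν θ) +
            lam * Sw θ)) - lam * P + η₀ + 1 / 2) :
    (∀ a b : ℝ → ℝ, HFeasible Sw P h a b → hObjective a b ≤ -g) ∧
    Cfb Sw P h ≤ -g :=
  weak_duality_general Sw hScont hSpos P hP h lam hlam η η₀ r2 hr2 hr2pos ν hν g hg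
end
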